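/- arXiv:2401.14977 — 5 statements merged into one kernel-verified Lean document; each statement's English description precedes it below -/
import Mathlib

section
/- Let R' > 0 and let R > 0 be defined by tanh R = min(1 − 2^{−R'}, (3/2)^{R'} − 1) (assuming this minimum lies in (0,1)). Then for every (j,k) ∈ ℤ², the geodesic ball B^g_R(2^{R'j} k, 2^{R'j}/cosh R) is contained in the rectangle 𝓡_{j,k}(R'). -/
open MeasureTheory Real Set

/-- Inverse hyperbolic cosine. -/
noncomputable def arcoshR (x : ℝ) : ℝ := Real.log (x + Real.sqrt (x ^ 2 - 1))

/-- The hyperbolic half-plane, as a subset of `ℝ × ℝ`. -/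
def H2 : Set (ℝ × ℝ) := {z | 0 < z.2}

/-- The geodesic distance on the hyperbolic half-plane. -/
noncomputable def hypDist (z z' : ℝ × ℝ) : ℝ :=
  arcoshR (1 + ((z.1 - z'.1) ^ 2 + (z.2 - z'.2) ^ 2) / (2 * z.2 * z'.2))

/-- The open geodesic ball of center `z` and radius `r`. -/
def hypBall (z : ℝ × ℝ) (r : ℝ) : Set (ℝ × ℝ) := {z' ∈ H2 | hypDist z z' < r}

/-- The rectangle `𝓡_{j,k}(R')`. -/
noncomputable def rect (R' : ℝ) (j k : ℤ) : Set (ℝ × ℝ) :=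
  {z | |z.1 - (2 : ℝ) ^ (R' * (j : ℝ)) * (k : ℝ)| < (2 : ℝ) ^ (R' * (j : ℝ)) ∧
       (2 : ℝ) ^ (R' * ((j : ℝ) - 1)) < z.2 ∧
       z.2 < (3 : ℝ) ^ R' * (2 : ℝ) ^ (R' * ((j : ℝ) - 1))}

lemma arcoshR_lt_imp {u R : ℝ} (hu : 1 ≤ u) (h : arcoshR u < R) : u < Real.cosh R := by
  have hs : Real.sqrt (u^2 - 1) ^ 2 = u^2 - 1 := Real.sq_sqrt (by nlinarith)
  have hs0 : 0 ≤ Real.sqrt (u^2-1) := Real.sqrt_nonneg _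
  set v := u + Real.sqrt (u^2-1) with hv
  have hv1 : 1 ≤ v := by nlinarith
  have hvE : v < Real.exp R :=
    (Real.log_lt_iff_lt_exp (by linarith : (0:ℝ) < v)).mp h
  have hEF : Real.exp R * Real.exp (-R) = 1 := by rw [← Real.exp_add]; simp
  have hF0 : 0 < Real.exp (-R) := Real.exp_pos _
  rw [Real.cosh_eq]
  have hvv : v^2 + 1 = 2*u*v := by rw [hv]; nlinarith
  nlinarith [mul_pos (sub_pos.mpr hvE) (show (0:ℝ) < v * Real.exp R - 1 by nlinarith),
    mul_pos hF0 (sub_pos.mpr hvE)]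

lemma aux_rect {a c s t y₀ X Y e2 e3 : ℝ}
    (ha0 : 0 < a) (hc1 : 1 ≤ c) (hs0 : 0 < s) (hcs : c^2 - s^2 = 1) (hts : s = t * c)
    (ht0 : 0 < t) (ht1 : t ≤ 1 - e2) (ht2 : t ≤ e3 - 1) (he2 : 0 < e2)
    (hy₀ : y₀ = a / c) (hY : 0 < Y)
    (key : X^2 + (Y - y₀)^2 < (c - 1) * (2 * y₀ * Y)) :
    |X| < a ∧ a * e2 < Y ∧ Y < a * e3 := by
  have hc0 : (0:ℝ) < c := lt_of_lt_of_le one_pos hc1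
  have hy₀0 : 0 < y₀ := hy₀ ▸ div_pos ha0 hc0
  have hy₀c : y₀ * c = a := by rw [hy₀]; field_simp
  have hy₀s : y₀ * s = a * t := by rw [hts, ← hy₀c]; ring
  have key2 : X^2 + Y^2 + y₀^2 < 2*y₀*c*Y := by nlinarith [key]
  have hcs' : y₀^2 * (c^2 - s^2) = y₀^2 := by rw [hcs]; ring
  have hQY : (Y - y₀*c)^2 < (y₀*s)^2 := by nlinarith [key2, hcs', sq_nonneg X]
  have hQX : X^2 < (y₀*s)^2 := by nlinarith [key2, hcs', sq_nonneg (Y - y₀*c)]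
  have h1 : 0 < a - a*t := by nlinarith
  have h2 : 0 < a + a*t := by nlinarith
  have hsq : (y₀*s)^2 = (a*t)^2 := by rw [hy₀s]
  have h12 : 0 < (a - a*t) * (a + a*t) := mul_pos h1 h2
  have hB0 : 0 ≤ y₀ * s := (mul_pos hy₀0 hs0).le
  obtain ⟨hW1, hW2⟩ := abs_lt_of_sq_lt_sq' hQY hB0
  refine ⟨?_, ?_, ?_⟩
  · have hXa : X^2 < a^2 := by linarith [hQX, hsq, h12]
    exact abs_lt_of_sq_lt_sq hXa ha0.le
  · have h3 : 0 ≤ a * (1 - e2 - t) := mul_nonneg ha0.le (by linarith)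
    linarith [hW1, hy₀c, hy₀s, h3]
  · have h3 : 0 ≤ a * (e3 - 1 - t) := mul_nonneg ha0.le (by linarith)
    linarith [hW2, hy₀c, hy₀s, h3]

/-- For `R` defined from `R'` by `tanh R = min(1 - 2^{-R'}, (3/2)^{R'} - 1)`, every rectangle
`𝓡_{j,k}(R')` contains the geodesic ball of radius `R` centered at
`(2^{R'j} k, 2^{R'j}/cosh R)`. -/
theorem ball_subset_rect (R' R : ℝ) (hR' : 0 < R') (hR : 0 < R)
    (htanh : Real.tanh R = min (1 - (2 : ℝ) ^ (-R')) (((3 : ℝ) / 2) ^ R' - 1))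
    (j k : ℤ) :
    hypBall ((2 : ℝ) ^ (R' * (j : ℝ)) * (k : ℝ), (2 : ℝ) ^ (R' * (j : ℝ)) / Real.cosh R) R
      ⊆ rect R' j k := by
  intro z hz
  obtain ⟨hy, hd⟩ := hz
  have hy : (0:ℝ) < z.2 := hy
  have ha0 : (0:ℝ) < (2:ℝ) ^ (R' * (j:ℝ)) := Real.rpow_pos_of_pos two_pos _
  have hc1 : 1 ≤ Real.cosh R := Real.one_le_cosh R
  have hc0 : (0:ℝ) < Real.cosh R := lt_of_lt_of_le one_pos hc1
  have hs0 : 0 < Real.sinh R := Real.sinh_pos_iff.mpr hR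
  have hcs : Real.cosh R ^ 2 - Real.sinh R ^ 2 = 1 := by rw [Real.cosh_sq]; ring
  have hts : Real.sinh R = Real.tanh R * Real.cosh R := by
    rw [Real.tanh_eq_sinh_div_cosh]; field_simp
  have ht0 : 0 < Real.tanh R := by
    rw [Real.tanh_eq_sinh_div_cosh]; positivity
  have ht1 : Real.tanh R ≤ 1 - (2:ℝ)^(-R') := htanh ▸ min_le_left _ _
  have ht2 : Real.tanh R ≤ ((3:ℝ)/2)^R' - 1 := htanh ▸ min_le_right _ _
  have he2 : (0:ℝ) < (2:ℝ)^(-R') := Real.rpow_pos_of_pos two_pos _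
  have hden : (0:ℝ) < 2 * ((2:ℝ) ^ (R' * (j:ℝ)) / Real.cosh R) * z.2 := by positivity
  have hu1 : 1 ≤ 1 + (((2:ℝ) ^ (R' * (j:ℝ)) * (k:ℝ) - z.1)^2
      + ((2:ℝ) ^ (R' * (j:ℝ)) / Real.cosh R - z.2)^2)
      / (2 * ((2:ℝ) ^ (R' * (j:ℝ)) / Real.cosh R) * z.2) := by
    have : (0:ℝ) ≤ (((2:ℝ) ^ (R' * (j:ℝ)) * (k:ℝ) - z.1)^2
        + ((2:ℝ) ^ (R' * (j:ℝ)) / Real.cosh R - z.2)^2)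
        / (2 * ((2:ℝ) ^ (R' * (j:ℝ)) / Real.cosh R) * z.2) :=
      div_nonneg (by positivity) hden.le
    linarith
  have hlt := arcoshR_lt_imp hu1 hd
  have key : ((2:ℝ) ^ (R' * (j:ℝ)) * (k:ℝ) - z.1)^2
      + (z.2 - (2:ℝ) ^ (R' * (j:ℝ)) / Real.cosh R)^2
      < (Real.cosh R - 1) * (2 * ((2:ℝ) ^ (R' * (j:ℝ)) / Real.cosh R) * z.2) := by
    have h' : (((2:ℝ) ^ (R' * (j:ℝ)) * (k:ℝ) - z.1)^2
        + ((2:ℝ) ^ (R' * (j:ℝ)) / Real.cosh R - z.2)^2)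
        / (2 * ((2:ℝ) ^ (R' * (j:ℝ)) / Real.cosh R) * z.2) < Real.cosh R - 1 := by
      linarith
    rw [div_lt_iff₀ hden] at h'
    nlinarith [h']
  obtain ⟨hXa, hYl, hYu⟩ := aux_rect ha0 hc1 hs0 hcs hts ht0 ht1 ht2 he2 rfl hy key
  have h2R : (2:ℝ) ^ (R' * ((j:ℝ) - 1)) = (2:ℝ) ^ (R' * (j:ℝ)) * (2:ℝ)^(-R') := by
    rw [← Real.rpow_add two_pos]; congr 1; ring
  have h3R : (3:ℝ) ^ R' * (2:ℝ) ^ (R' * ((j:ℝ) - 1))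
      = (2:ℝ) ^ (R' * (j:ℝ)) * ((3:ℝ)/2)^R' := by
    rw [h2R, Real.div_rpow (by norm_num) (by norm_num), Real.rpow_neg (by norm_num)]
    have h2ne : ((2:ℝ)^R') ≠ 0 := (Real.rpow_pos_of_pos two_pos _).ne'
    field_simp
  refine ⟨?_, ?_, ?_⟩
  · show |z.1 - (2:ℝ) ^ (R' * (j:ℝ)) * (k:ℝ)| < (2:ℝ) ^ (R' * (j:ℝ))
    rw [abs_sub_comm]; exact hXa
  · show (2:ℝ) ^ (R' * ((j:ℝ) - 1)) < z.2
    rw [h2R]; exact hYl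
  · show z.2 < (3:ℝ) ^ R' * (2:ℝ) ^ (R' * ((j:ℝ) - 1))
    rw [h3R]; exact hYu
end

section
/- Let δ, R > 0, let ω ⊂ ℍ² be a Borel set that is (δ,R)-thick, and let R' > 0 satisfy tanh R = min(1 − 2^{−R'}, (3/2)^{R'} − 1). Then for every (j,k) ∈ ℤ², ∫_{ω ∩ 𝓡_{j,k}(R')} dx dy / y² ≥ δ. -/
open MeasureTheory Real Set

/-- The Riemannian measure `dvol_g = dx dy / y²` of the hyperbolic half-plane. -/
noncomputable def volG : Measure (ℝ × ℝ) :=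
  (volume : Measure (ℝ × ℝ)).withDensity fun z => ENNReal.ofReal (z.2 ^ 2)⁻¹

/-
A hyperbolic ball is a Euclidean disc: `B^g_R(x₀, y₀)` is the disc of centre `(x₀, y₀ cosh R)`
and radius `y₀ sinh R`. Taking `y₀ = 2^{R'j} / cosh R` puts the centre at `(2^{R'j} k, 2^{R'j})`
and makes the radius `2^{R'j} tanh R`, and the condition on `tanh R` is exactly what makes this
disc fit in `𝓡_{j,k}(R')`. Thickness applied to that ball gives the bound.
-/

lemma lt_cosh_of_arcosh_lt {x R : ℝ} (hx : 1 ≤ x) (h : arcosh x < R) : x < cosh R := by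
  have h0 : 0 ≤ arcosh x := arcosh_nonneg hx
  rw [← cosh_arcosh hx, cosh_lt_cosh, abs_of_nonneg h0, abs_of_pos (h0.trans_lt h)]
  exact h

lemma hypBall_subset_disc {x₀ y₀ : ℝ} (R : ℝ) (hy₀ : 0 < y₀) :
    hypBall (x₀, y₀) R ⊆
      {z | (z.1 - x₀) ^ 2 + (z.2 - y₀ * cosh R) ^ 2 < (y₀ * sinh R) ^ 2} := by
  rintro ⟨x, y⟩ ⟨hy, hd⟩
  have hy : 0 < y := hy
  have hden : 0 < 2 * y₀ * y := by positivity
  set D := (x₀ - x) ^ 2 + (y₀ - y) ^ 2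
  -- `arcoshR` unfolds to `Real.arcosh`
  have hcosh : 1 + D / (2 * y₀ * y) < cosh R :=
    lt_cosh_of_arcosh_lt (le_add_of_nonneg_right (by positivity)) hd
  have hD : D < (cosh R - 1) * (2 * y₀ * y) := by
    rw [← div_lt_iff₀ hden]
    linarith
  show (x - x₀) ^ 2 + (y - y₀ * cosh R) ^ 2 < (y₀ * sinh R) ^ 2
  linear_combination hD + y₀ ^ 2 * cosh_sq R

lemma two_rpow_mul_sub_one (R' t : ℝ) :
    (2 : ℝ) ^ (R' * (t - 1)) = 2 ^ (R' * t) * 2 ^ (-R') := by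
  rw [← rpow_add two_pos]
  ring_nf

lemma three_rpow_mul_two_rpow_mul_sub_one (R' t : ℝ) :
    (3 : ℝ) ^ R' * 2 ^ (R' * (t - 1)) = 2 ^ (R' * t) * (3 / 2) ^ R' := by
  rw [two_rpow_mul_sub_one, div_rpow (by norm_num) (by norm_num), rpow_neg (by norm_num)]
  ring

lemma disc_subset_rect {R' r : ℝ} (j k : ℤ) (hr : 0 ≤ r)
    (hlow : r ≤ 2 ^ (R' * j) * (1 - 2 ^ (-R')))
    (hup : r ≤ 2 ^ (R' * j) * ((3 / 2) ^ R' - 1)) :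
    {z : ℝ × ℝ | (z.1 - 2 ^ (R' * j) * k) ^ 2 + (z.2 - 2 ^ (R' * j)) ^ 2 < r ^ 2} ⊆
      rect R' j k := by
  rintro ⟨x, y⟩ hz
  simp only [mem_ofPred_eq] at hz
  have hx : |x - 2 ^ (R' * j) * k| < r :=
    abs_lt_of_sq_lt_sq (by nlinarith [sq_nonneg (y - 2 ^ (R' * j))]) hr
  obtain ⟨hy_low, hy_up⟩ : -r < y - 2 ^ (R' * j) ∧ y - 2 ^ (R' * j) < r :=
    abs_lt.1 <| abs_lt_of_sq_lt_sq (by nlinarith [sq_nonneg (x - 2 ^ (R' * j) * k)]) hr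
  have hpos : (0 : ℝ) < 2 ^ (R' * j) * 2 ^ (-R') := by positivity
  refine ⟨hx.trans_le (by linarith), ?_, ?_⟩ <;> dsimp only
  · rw [two_rpow_mul_sub_one]
    linarith
  · rw [three_rpow_mul_two_rpow_mul_sub_one]
    linarith

lemma hypBall_subset_rect {R R' : ℝ} (hR : 0 < R)
    (htanh : tanh R = min (1 - (2 : ℝ) ^ (-R')) ((3 / 2 : ℝ) ^ R' - 1)) (j k : ℤ) :
    hypBall (2 ^ (R' * j) * k, 2 ^ (R' * j) / cosh R) R ⊆ rect R' j k := by
  set a : ℝ := 2 ^ (R' * j)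
  have ha : 0 < a := by positivity
  have hT : 0 ≤ tanh R := by
    rw [tanh_eq_sinh_div_cosh]
    exact div_nonneg (sinh_nonneg_iff.2 hR.le) (cosh_pos R).le
  have hball := hypBall_subset_disc (x₀ := a * k) R (div_pos ha (cosh_pos R))
  rw [div_mul_cancel₀ a (cosh_pos R).ne', div_mul_eq_mul_div, mul_div_assoc,
    ← tanh_eq_sinh_div_cosh] at hball
  refine hball.trans (disc_subset_rect j k (by positivity) ?_ ?_) <;>
    gcongr <;> simp [htanh]

theorem thick_implies_rect_lower_bound_general (δ R R' : ℝ) (hR : 0 < R)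
    (ω : Set (ℝ × ℝ))
    (hthick : ∀ z : ℝ × ℝ, 0 < z.2 → ENNReal.ofReal δ ≤ volG (ω ∩ hypBall z R))
    (htanh : Real.tanh R = min (1 - (2 : ℝ) ^ (-R')) (((3 : ℝ) / 2) ^ R' - 1)) :
    ∀ j k : ℤ, ENNReal.ofReal δ ≤ volG (ω ∩ rect R' j k) := by
  intro j k
  calc ENNReal.ofReal δ
      ≤ volG (ω ∩ hypBall (2 ^ (R' * j) * k, 2 ^ (R' * j) / cosh R) R) :=
        hthick _ (div_pos (by positivity) (cosh_pos R))
    _ ≤ volG (ω ∩ rect R' j k) :=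
        measure_mono (inter_subset_inter_right _ (hypBall_subset_rect hR htanh j k))

/-- If `ω` is a `(δ,R)`-thick Borel subset of the hyperbolic half-plane and
`tanh R = min(1 - 2^{-R'}, (3/2)^{R'} - 1)`, then every rectangle `𝓡_{j,k}(R')` meets `ω`
in a set of hyperbolic measure at least `δ`. -/
theorem thick_implies_rect_lower_bound (δ R R' : ℝ) (hδ : 0 < δ) (hR : 0 < R) (hR' : 0 < R')
    (ω : Set (ℝ × ℝ)) (hω : MeasurableSet ω) (hωH2 : ω ⊆ H2)
    (hthick : ∀ z : ℝ × ℝ, 0 < z.2 → ENNReal.ofReal δ ≤ volG (ω ∩ hypBall z R))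
    (htanh : Real.tanh R = min (1 - (2 : ℝ) ^ (-R')) (((3 : ℝ) / 2) ^ R' - 1)) :
    ∀ j k : ℤ, ENNReal.ofReal δ ≤ volG (ω ∩ rect R' j k) :=
  thick_implies_rect_lower_bound_general δ R R' hR ω hthick htanh
end

section
/- (Abstract L∞-to-L² upgrade.) Let (X,μ) be a measure space, δ > 0, F ⊂ X measurable with μ(F) ≥ δ, and let g : F → [0,∞) be measurable. Let M, S be real numbers with 0 ≤ M and 0 < S, let C ≥ 1 and α ∈ (0,1), and assume that for every measurable subset F' ⊂ F with μ(F') ≥ δ/2 one has M ≤ C (sup_{F'} g)^α S^{1−α}. Then M² ≤ C' (∫_F g² dμ)^α S^{2−2α}, where C' > 0 depends only on C, α and δ. -/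
open MeasureTheory Real Set
open scoped ENNReal

/-! Put `I = ∫_F g²` and `η = δ/2`. By Markov's inequality `g² ≤ I/η` outside a subset of `F` of
measure at most `η`, so the hypothesis applies to `F' = F ∩ {g² ≤ I/η}`, where `sup g ≤ (I/η)^(1/2)`.
Squaring the resulting bound on `M` gives the claim with `C' = C² / (δ/2)^α`. -/

section Markov

variable {X : Type*} [MeasurableSpace X] {μ : Measure X} {f : X → ℝ≥0∞} {η : ℝ≥0∞}

theorem measure_lintegral_div_lt_le (hf : AEMeasurable f μ) (hη0 : η ≠ 0) (hη : η ≠ ∞) :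
    μ {x | (∫⁻ x, f x ∂μ) / η < f x} ≤ η := by
  set I := ∫⁻ x, f x ∂μ
  rcases eq_or_ne I 0 with hI0 | hI0
  · have hf0 : ∀ᵐ x ∂μ, f x = 0 := (lintegral_eq_zero_iff' hf).1 hI0
    have hnull : μ {x | I / η < f x} = 0 := by
      rw [hI0, ENNReal.zero_div]
      exact measure_mono_null (fun x hx => (show 0 < f x from hx).ne') (ae_iff.1 hf0)
    exact hnull ▸ zero_le
  rcases eq_or_ne I ∞ with hItop | hItop
  · simp [hItop, ENNReal.top_div_of_ne_top hη]
  calc μ {x | I / η < f x} ≤ μ {x | I / η ≤ f x} :=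
      measure_mono fun x (hx : I / η < f x) => hx.le
    _ ≤ I / (I / η) :=
      meas_ge_le_lintegral_div hf (ENNReal.div_ne_zero.2 ⟨hI0, hη⟩) (ENNReal.div_ne_top hItop hη0)
    _ = η := ENNReal.div_div_cancel hI0 hItop

theorem le_measure_inter_setOf_le_setLIntegral_div {F : Set X} (hF : MeasurableSet F)
    (hf : AEMeasurable f (μ.restrict F)) (hη0 : η ≠ 0) (hη : η ≠ ∞) (hμF : η + η ≤ μ F) :
    η ≤ μ (F ∩ {x | f x ≤ (∫⁻ x in F, f x ∂μ) / η}) := by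
  set G := {x | f x ≤ (∫⁻ x in F, f x ∂μ) / η}
  have hbad : μ (F \ G) ≤ η := by
    refine le_trans ?_ (measure_lintegral_div_lt_le hf hη0 hη)
    rw [Measure.restrict_apply' hF]
    exact measure_mono fun x ⟨hxF, hxG⟩ => ⟨not_le.1 (show ¬f x ≤ _ from hxG), hxF⟩
  refine ENNReal.le_of_add_le_add_right hη ?_
  calc η + η ≤ μ F := hμF
    _ ≤ μ (F ∩ G) + μ (F \ G) := measure_le_inter_add_sdiff μ F G
    _ ≤ μ (F ∩ G) + η := by gcongr

end Markov

theorem ENNReal.sq_mul_rpow_mul_rpow_one_sub (a b c : ℝ≥0∞) (α : ℝ) :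
    (a * b ^ α * c ^ (1 - α)) ^ 2 = a ^ 2 * (b ^ 2) ^ α * c ^ (2 - 2 * α) := by
  have hpow : ∀ (x : ℝ≥0∞) (y : ℝ), (x ^ y) ^ 2 = x ^ (y * 2) := fun x y => by
    rw [← ENNReal.rpow_natCast, ← ENNReal.rpow_mul]; norm_num
  rw [mul_pow, mul_pow, hpow, hpow, ← ENNReal.rpow_natCast b 2, ← ENNReal.rpow_mul]
  ring_nf

/-- Abstract L∞-to-L² upgrade: if `M ≤ C (sup_{F'} g)^α S^{1-α}` for every sufficiently large
measurable subset `F' ⊆ F`, then `M² ≤ C' (∫_F g² dμ)^α S^{2-2α}`, with `C'` depending only on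
`C`, `α` and `δ`. -/
theorem linfty_to_l2_upgrade (δ C α : ℝ) (hδ : 0 < δ) (hC : 1 ≤ C)
    (hα : α ∈ Set.Ioo (0 : ℝ) 1) :
    ∃ C' > 0,
      ∀ (X : Type) (_ : MeasurableSpace X) (μ : Measure X) (F : Set X) (g : X → ℝ) (M S : ℝ),
        MeasurableSet F → ENNReal.ofReal δ ≤ μ F →
        Measurable g → (∀ x ∈ F, 0 ≤ g x) →
        0 ≤ M → 0 < S →
        (∀ F' : Set X, F' ⊆ F → MeasurableSet F' → ENNReal.ofReal (δ / 2) ≤ μ F' →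
          ENNReal.ofReal M ≤ ENNReal.ofReal C *
            (⨆ x ∈ F', ENNReal.ofReal (g x)) ^ α * ENNReal.ofReal S ^ (1 - α)) →
        ENNReal.ofReal (M ^ 2) ≤ ENNReal.ofReal C' *
          (∫⁻ x in F, ENNReal.ofReal (g x ^ 2) ∂μ) ^ α *
            ENNReal.ofReal S ^ (2 - 2 * α) := by
  refine ⟨C ^ 2 / (δ / 2) ^ α, by positivity, ?_⟩
  intro X _ μ F g M S hF hμF hg hg0 hM hS hyp
  set η := ENNReal.ofReal (δ / 2)
  set I := ∫⁻ x in F, ENNReal.ofReal (g x ^ 2) ∂μ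
  set F' := F ∩ {x | ENNReal.ofReal (g x ^ 2) ≤ I / η}
  have hg2 : Measurable fun x => ENNReal.ofReal (g x ^ 2) := (hg.pow_const 2).ennreal_ofReal
  have hF'meas : MeasurableSet F' := hF.inter (measurableSet_le hg2 measurable_const)
  have hF'large : η ≤ μ F' := by
    refine le_measure_inter_setOf_le_setLIntegral_div hF hg2.aemeasurable
      (ENNReal.ofReal_pos.2 (by positivity)).ne' ENNReal.ofReal_ne_top ?_
    rwa [← ENNReal.ofReal_add (by positivity) (by positivity), add_halves]
  have hsup : (⨆ x ∈ F', ENNReal.ofReal (g x)) ^ 2 ≤ I / η := by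
    simp only [ENNReal.iSup_pow_of_ne_zero two_ne_zero]
    exact iSup₂_le fun x hx => ENNReal.ofReal_pow (hg0 x hx.1) 2 ▸ hx.2
  calc ENNReal.ofReal (M ^ 2) = ENNReal.ofReal M ^ 2 := ENNReal.ofReal_pow hM 2
    _ ≤ (ENNReal.ofReal C * (⨆ x ∈ F', ENNReal.ofReal (g x)) ^ α *
          ENNReal.ofReal S ^ (1 - α)) ^ 2 := by
      gcongr
      exact hyp F' inter_subset_left hF'meas hF'large
    _ = ENNReal.ofReal C ^ 2 * ((⨆ x ∈ F', ENNReal.ofReal (g x)) ^ 2) ^ α *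
          ENNReal.ofReal S ^ (2 - 2 * α) := ENNReal.sq_mul_rpow_mul_rpow_one_sub _ _ _ _
    _ ≤ ENNReal.ofReal C ^ 2 * (I / η) ^ α * ENNReal.ofReal S ^ (2 - 2 * α) := by
      gcongr
      exact hα.1.le
    _ = ENNReal.ofReal (C ^ 2 / (δ / 2) ^ α) * I ^ α * ENNReal.ofReal S ^ (2 - 2 * α) := by
      rw [ENNReal.div_rpow_of_nonneg _ _ hα.1.le, ENNReal.ofReal_div_of_pos (by positivity),
        ENNReal.ofReal_pow (by linarith), ← ENNReal.ofReal_rpow_of_pos (by positivity)]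
      simp only [div_eq_mul_inv, η]
      ring
end

section
/- (Telescoping series lemma: interpolation implies observability.) Let T > 0 and C̃ > 0. Let F : (0,T] → [0,∞) be nonincreasing and let G : (0,T] → [0,∞) be Lebesgue measurable. Assume that for all 0 < t₁ < t₂ ≤ T and all ε > 0, F(t₂) ≤ ε^{−1} exp(2C̃(1 + 1/(t₂ − t₁))) G(t₂) + ε F(t₁). Then there exists a constant C_obs > 0, depending only on T and C̃, such that F(T) ≤ C_obs ∫_0^T G(s) ds. -/
/-!
Take times `aₙ = T/2 + T/(2(n+1))`, decreasing from `T` to `T/2`, and Gaussian weights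
`qₙ = exp (-β n (n+6))`. Averaging the interpolation inequality with `ε = qₙ₊₁/qₙ` over the upper
half of `[aₙ₊₁, aₙ]`, where `t₂ - t₁ ≥ (aₙ - aₙ₊₁)/2`, gives
`qₙ F(aₙ) ≤ c ∫_{aₙ₊₁}^{aₙ} G + qₙ₊₁ F(aₙ₊₁)`: for `β` large in terms of `C̃` and `T`, the
decay `qₙ² / qₙ₊₁ = exp (β (7 - n (n+4)))` beats both the prefactor `2/(aₙ - aₙ₊₁) ~ 4n²/T` and
the kernel `exp (2C̃ (1 + 2/(aₙ - aₙ₊₁)))`. Telescoping yields `F(T) ≤ c ∫_0^T G + qₙ F(T/2)`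
for every `n`, and `qₙ → 0`.
-/

open MeasureTheory Real Set
open Filter Topology intervalIntegral

def InterpolationInequality (C T : ℝ) (F G : ℝ → ℝ) : Prop :=
  ∀ t₁ t₂ : ℝ, 0 < t₁ → t₁ < t₂ → t₂ ≤ T → ∀ ε : ℝ, 0 < ε →
    F t₂ ≤ ε⁻¹ * exp (2 * C * (1 + 1 / (t₂ - t₁))) * G t₂ + ε * F t₁

noncomputable section

namespace Telescoping

def time (T : ℝ) (n : ℕ) : ℝ := T / 2 + T / (2 * (n + 1))

def weight (β : ℝ) (n : ℕ) : ℝ := exp (-(β * (n * (n + 6))))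

def decayRate (C T : ℝ) : ℝ := 4 * (1 + 2 * C) / T + C

def observabilityConstant (C T : ℝ) : ℝ := exp (9 * decayRate C T)

variable {C T β : ℝ}

theorem observabilityConstant_pos : 0 < observabilityConstant C T := exp_pos _

theorem time_zero (T : ℝ) : time T 0 = T := by
  simp only [time]; ring

theorem time_sub_time_succ (n : ℕ) : time T n - time T (n + 1) = T / (2 * (n + 1) * (n + 2)) := by
  simp only [time]; push_cast; field_simp; ring

theorem half_lt_time (hT : 0 < T) (n : ℕ) : T / 2 < time T n := by
  simp only [time]; linarith [show 0 < T / (2 * (n + 1)) by positivity]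

theorem time_le (hT : 0 ≤ T) (n : ℕ) : time T n ≤ T := by
  have : T / (2 * (n + 1)) ≤ T / 2 := by gcongr; linarith [n.cast_nonneg (α := ℝ)]
  simp only [time]; linarith

theorem time_mem_Ioc (hT : 0 < T) (n : ℕ) : time T n ∈ Ioc 0 T :=
  ⟨(half_pos hT).trans (half_lt_time hT n), time_le hT.le n⟩

theorem time_succ_lt (hT : 0 < T) (n : ℕ) : time T (n + 1) < time T n := by
  have := time_sub_time_succ (T := T) n
  have : 0 < T / (2 * (n + 1) * (n + 2)) := by positivity
  linarith

theorem decayRate_pos (hT : 0 < T) (hC : 0 ≤ C) : 0 < decayRate C T :=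
  add_pos_of_pos_of_nonneg (div_pos (by linarith) hT) hC

theorem weight_pos (β : ℝ) (n : ℕ) : 0 < weight β n := exp_pos _

theorem weight_zero (β : ℝ) : weight β 0 = 1 := by simp [weight]

theorem tendsto_weight (hβ : 0 < β) : Tendsto (weight β) atTop (𝓝 0) := by
  refine tendsto_exp_neg_atTop_nhds_zero.comp (Tendsto.const_mul_atTop hβ ?_)
  refine tendsto_atTop_mono (fun n => ?_) tendsto_natCast_atTop_atTop
  have : (0 : ℝ) ≤ n := n.cast_nonneg
  nlinarith

theorem weight_sq_div_weight_succ (β : ℝ) (n : ℕ) :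
    weight β n ^ 2 / weight β (n + 1) = exp (β * (7 - n * (n + 4))) := by
  rw [weight, weight, ← exp_nat_mul, ← exp_sub]
  push_cast
  ring_nf

theorem weight_sq_div_mul_kernel_le (hT : 0 < T) (hC : 0 ≤ C) (n : ℕ) :
    weight (decayRate C T) n ^ 2 / weight (decayRate C T) (n + 1) *
      (2 / (time T n - time T (n + 1)) *
        exp (2 * C * (1 + 2 / (time T n - time T (n + 1))))) ≤ observabilityConstant C T := by
  set β := decayRate C T with hβ
  set P : ℝ := 4 * (n + 1) * (n + 2) / T with hP
  have htwo : 2 / (time T n - time T (n + 1)) = P := by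
    rw [time_sub_time_succ, hP]; field_simp; ring
  have hgap : β * (n * (n + 4) + 2) - (P + 2 * C * (1 + P))
      = 4 * (1 + 2 * C) * n / T + C * (n * (n + 4)) := by
    rw [hβ, hP, decayRate]; field_simp; ring
  have : 0 ≤ 4 * (1 + 2 * C) * n / T + C * (n * (n + 4)) := by positivity
  rw [weight_sq_div_weight_succ, htwo, observabilityConstant]
  calc exp (β * (7 - n * (n + 4))) * (P * exp (2 * C * (1 + P)))
      ≤ exp (β * (7 - n * (n + 4))) * (exp P * exp (2 * C * (1 + P))) := by
        gcongr; linarith [add_one_le_exp P]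
    _ = exp (β * (7 - n * (n + 4)) + P + 2 * C * (1 + P)) := by rw [exp_add, exp_add]; ring
    _ ≤ exp (9 * β) := exp_le_exp.2 (by linarith)

end Telescoping

end

namespace InterpolationInequality

open Telescoping

variable {C T : ℝ} {F G : ℝ → ℝ}

theorem le_integral (hI : InterpolationInequality C T F G)
    (hC : 0 ≤ C) (hF : AntitoneOn F (Ioc 0 T)) (hG0 : ∀ t ∈ Ioc 0 T, 0 ≤ G t)
    (hG : IntegrableOn G (Ioc 0 T)) {s t ε : ℝ} (hs : 0 < s) (hst : s < t) (ht : t ≤ T)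
    (hε : 0 < ε) :
    F t ≤ ε⁻¹ * (2 / (t - s) * exp (2 * C * (1 + 2 / (t - s)))) * (∫ u in s..t, G u)
      + ε * F s := by
  set K := exp (2 * C * (1 + 2 / (t - s)))
  obtain ⟨m, hm⟩ : ∃ m, m = (s + t) / 2 := ⟨_, rfl⟩
  have hsub : Ioc m t ⊆ Ioc 0 T := Ioc_subset_Ioc (by linarith) ht
  have hpoint : ∀ u ∈ Ioc m t, F t ≤ ε⁻¹ * K * G u + ε * F s := by
    intro u hu
    have hu0 : u ∈ Ioc 0 T := hsub hu
    have hkernel : exp (2 * C * (1 + 1 / (u - s))) ≤ K := by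
      have : 1 / (u - s) ≤ 2 / (t - s) := by
        rw [div_le_div_iff₀ (by linarith [hu.1]) (by linarith)]
        linarith [hu.1]
      exact exp_le_exp.2 (by gcongr)
    calc F t ≤ F u := hF hu0 ⟨hs.trans hst, ht⟩ hu.2
      _ ≤ ε⁻¹ * exp (2 * C * (1 + 1 / (u - s))) * G u + ε * F s :=
        hI s u hs (by linarith [hu.1]) hu0.2 ε hε
      _ ≤ ε⁻¹ * K * G u + ε * F s := by gcongr; exact hG0 u hu0
  have hGm : IntegrableOn G (Ioc m t) := hG.mono_set hsub
  have havg := setIntegral_ge_of_const_le_real measurableSet_Ioc measure_Ioc_lt_top.ne hpoint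
    ((hGm.const_mul _).add (integrableOn_const measure_Ioc_lt_top.ne))
  rw [integral_add (hGm.const_mul _) (integrableOn_const measure_Ioc_lt_top.ne),
    MeasureTheory.integral_const_mul, setIntegral_const, Real.volume_real_Ioc_of_le (by linarith),
    smul_eq_mul] at havg
  have hmono : ∫ u in Ioc m t, G u ≤ ∫ u in s..t, G u := by
    rw [integral_of_le hst.le]
    exact setIntegral_mono_set (hG.mono_set (Ioc_subset_Ioc hs.le ht))
      ((ae_restrict_iff' measurableSet_Ioc).2 (.of_forall fun u hu =>
        hG0 u ⟨hs.trans hu.1, hu.2.trans ht⟩))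
      (Ioc_subset_Ioc_left (by linarith)).eventuallyLE
  set J := ∫ u in s..t, G u
  clear_value J
  have hhalf : 0 < t - m := by linarith
  have hwhole : F t * (t - m) ≤ ε⁻¹ * K * J + (t - m) * (ε * F s) := by
    have : 0 ≤ ε⁻¹ * K := by positivity
    nlinarith [mul_le_mul_of_nonneg_left hmono this]
  have htwo : 2 / (t - s) = (t - m)⁻¹ := by
    rw [hm]; field_simp; ring
  rw [htwo]
  calc F t = F t * (t - m) / (t - m) := by field_simp
    _ ≤ (ε⁻¹ * K * J + (t - m) * (ε * F s)) / (t - m) := by gcongr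
    _ = ε⁻¹ * ((t - m)⁻¹ * K) * J + ε * F s := by field_simp

theorem weight_mul_le (hI : InterpolationInequality C T F G) (hT : 0 < T) (hC : 0 ≤ C)
    (hF : AntitoneOn F (Ioc 0 T)) (hG0 : ∀ t ∈ Ioc 0 T, 0 ≤ G t) (hG : IntegrableOn G (Ioc 0 T))
    (n : ℕ) :
    weight (decayRate C T) n * F (time T n) ≤
      observabilityConstant C T * (∫ u in time T (n + 1)..time T n, G u)
        + weight (decayRate C T) (n + 1) * F (time T (n + 1)) := by
  set q := weight (decayRate C T)
  set d := time T n - time T (n + 1)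
  have hq : ∀ k, 0 < q k := weight_pos _
  have hstep := hI.le_integral hC hF hG0 hG (time_mem_Ioc hT (n + 1)).1 (time_succ_lt hT n)
    (time_le hT.le n) (div_pos (hq (n + 1)) (hq n))
  have hJ : 0 ≤ ∫ u in time T (n + 1)..time T n, G u :=
    integral_nonneg (time_succ_lt hT n).le fun u hu =>
      hG0 u ⟨(time_mem_Ioc hT (n + 1)).1.trans_le hu.1, hu.2.trans (time_le hT.le n)⟩
  calc q n * F (time T n)
      ≤ q n * ((q (n + 1) / q n)⁻¹ * (2 / d * exp (2 * C * (1 + 2 / d)))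
          * (∫ u in time T (n + 1)..time T n, G u) + q (n + 1) / q n * F (time T (n + 1))) :=
        mul_le_mul_of_nonneg_left hstep (hq n).le
    _ = q n ^ 2 / q (n + 1) * (2 / d * exp (2 * C * (1 + 2 / d)))
          * (∫ u in time T (n + 1)..time T n, G u) + q (n + 1) * F (time T (n + 1)) := by
        have := (hq n).ne'
        have := (hq (n + 1)).ne'
        field_simp
    _ ≤ observabilityConstant C T * (∫ u in time T (n + 1)..time T n, G u)
          + q (n + 1) * F (time T (n + 1)) := by
        gcongr
        exact weight_sq_div_mul_kernel_le hT hC n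

theorem observability (hI : InterpolationInequality C T F G) (hT : 0 < T)
    (hC : 0 ≤ C) (hF : AntitoneOn F (Ioc 0 T)) (hG0 : ∀ t ∈ Ioc 0 T, 0 ≤ G t)
    (hG : IntegrableOn G (Ioc 0 T)) :
    F T ≤ observabilityConstant C T * ∫ t in Ioc 0 T, G t := by
  set c := observabilityConstant C T
  set q := weight (decayRate C T)
  have hGI : ∀ x y, 0 ≤ x → x ≤ y → y ≤ T → IntervalIntegrable G volume x y :=
    fun x y hx hxy hy =>
      (intervalIntegrable_iff_integrableOn_Ioc_of_le hxy).2 (hG.mono_set (Ioc_subset_Ioc hx hy))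
  let V : ℕ → ℝ := fun n => c * (∫ u in time T n..T, G u) + q n * F (time T n)
  have hV : Monotone V := monotone_nat_of_le_succ fun n => by
    have ha := time_mem_Ioc hT (n + 1)
    simp only [V]
    rw [← integral_add_adjacent_intervals (hGI _ _ ha.1.le (time_succ_lt hT n).le
      (time_le hT.le n)) (hGI _ _ (time_mem_Ioc hT n).1.le (time_le hT.le n) le_rfl)]
    linarith [hI.weight_mul_le hT hC hF hG0 hG n]
  have hbound : ∀ n, V n ≤ c * (∫ t in Ioc 0 T, G t) + q n * F (T / 2) := by
    intro n
    have ha := time_mem_Ioc hT n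
    have hint : ∫ u in time T n..T, G u ≤ ∫ t in Ioc 0 T, G t := by
      rw [← integral_of_le hT.le]
      exact integral_mono_interval ha.1.le ha.2 le_rfl
        ((ae_restrict_iff' measurableSet_Ioc).2 (.of_forall hG0)) (hGI 0 T le_rfl hT.le le_rfl)
    have hFa : F (time T n) ≤ F (T / 2) :=
      hF ⟨half_pos hT, half_le_self hT.le⟩ ha (half_lt_time hT n).le
    have : 0 ≤ q n := (weight_pos _ n).le
    have : 0 ≤ c := observabilityConstant_pos.le
    simp only [V]
    gcongr
  have hlim : Tendsto (fun n => c * (∫ t in Ioc 0 T, G t) + q n * F (T / 2)) atTop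
      (𝓝 (c * ∫ t in Ioc 0 T, G t)) := by
    simpa using
      tendsto_const_nhds.add ((tendsto_weight (decayRate_pos hT hC)).mul_const (F (T / 2)))
  refine ge_of_tendsto' hlim fun n => ?_
  calc F T = V 0 := by simp [V, q, time_zero, weight_zero]
    _ ≤ V n := hV n.zero_le
    _ ≤ _ := hbound n

end InterpolationInequality

/-- Telescoping series lemma: a Hölder-type interpolation inequality for a nonincreasing
nonnegative function `F` implies an observability-type bound `F(T) ≤ C_obs ∫_0^T G`. -/
theorem telescoping_observability (T Ctilde : ℝ) (hT : 0 < T) (hC : 0 < Ctilde) :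
    ∃ Cobs > 0, ∀ F G : ℝ → ℝ,
      (∀ t ∈ Set.Ioc (0 : ℝ) T, 0 ≤ F t) →
      AntitoneOn F (Set.Ioc (0 : ℝ) T) →
      (∀ t ∈ Set.Ioc (0 : ℝ) T, 0 ≤ G t) →
      Measurable G →
      (∀ t₁ t₂ : ℝ, 0 < t₁ → t₁ < t₂ → t₂ ≤ T → ∀ ε : ℝ, 0 < ε →
        F t₂ ≤ ε⁻¹ * Real.exp (2 * Ctilde * (1 + 1 / (t₂ - t₁))) * G t₂ + ε * F t₁) →
      ENNReal.ofReal (F T) ≤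
        ENNReal.ofReal Cobs * ∫⁻ s in Set.Ioc (0 : ℝ) T, ENNReal.ofReal (G s) := by
  refine ⟨Telescoping.observabilityConstant Ctilde T, Telescoping.observabilityConstant_pos,
    fun F G _ hF hG0 hGm hI => ?_⟩
  by_cases hfin : ∫⁻ s in Ioc 0 T, ENNReal.ofReal (G s) = ⊤
  · rw [hfin, ENNReal.mul_top (ENNReal.ofReal_pos.2 Telescoping.observabilityConstant_pos).ne']
    exact le_top
  have hG0' : 0 ≤ᵐ[volume.restrict (Ioc 0 T)] G :=
    (ae_restrict_iff' measurableSet_Ioc).2 (.of_forall hG0)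
  have hG : IntegrableOn G (Ioc 0 T) :=
    ⟨hGm.aestronglyMeasurable, (hasFiniteIntegral_iff_ofReal hG0').2 (lt_top_iff_ne_top.2 hfin)⟩
  rw [← ofReal_integral_eq_lintegral_ofReal hG hG0',
    ← ENNReal.ofReal_mul Telescoping.observabilityConstant_pos.le]
  exact ENNReal.ofReal_le_ofReal
    (InterpolationInequality.observability hI hT hC.le hF hG0 hG)
end

section
/- For every t > 0 and every d ≥ 0, the function s ↦ s e^{−s²/(4t)} (cosh s − cosh d)^{−1/2} is integrable on (d, ∞); in particular the integral defining the hyperbolic heat kernel H(t,z,z') is finite for all t > 0 and z, z' ∈ ℍ². -/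
open MeasureTheory Real Set

/-- The heat kernel of the hyperbolic half-plane. -/
noncomputable def heatH (t : ℝ) (z z' : ℝ × ℝ) : ℝ :=
  Real.sqrt 2 / (4 * Real.pi * t) ^ ((3 : ℝ) / 2) * Real.exp (-t / 4) *
    ∫ s in Set.Ioi (hypDist z z'),
      s * Real.exp (-s ^ 2 / (4 * t)) / Real.sqrt (Real.cosh s - Real.cosh (hypDist z z'))

/-!
The integrand `s e^{-s²/4t} / √(cosh s - cosh d)` has an inverse square-root singularity at
`s = d` and Gaussian decay at infinity. Writing `cosh s - cosh d = 2 sinh((s+d)/2) sinh((s-d)/2)`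
and using `x ≤ sinh x` gives `cosh s - cosh d ≥ s (s - d) / 2`, so the integrand is at most
`√(2s) / √(s - d)` near `d` (integrable singularity) and at most `√2 s e^{-s²/4t}` once
`s ≥ d + 1` (integrable tail).
-/

lemma arcoshR_eq_arcosh : arcoshR = Real.arcosh := rfl

lemma hypDist_nonneg {z z' : ℝ × ℝ} (hz : z ∈ H2) (hz' : z' ∈ H2) : 0 ≤ hypDist z z' := by
  have hz2 : 0 < z.2 := hz
  have hz'2 : 0 < z'.2 := hz'
  rw [hypDist, arcoshR_eq_arcosh]
  exact arcosh_nonneg (le_add_of_nonneg_right (by positivity))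

lemma cosh_sub_cosh_eq_two_mul_sinh_mul_sinh (s d : ℝ) :
    cosh s - cosh d = 2 * sinh ((s + d) / 2) * sinh ((s - d) / 2) := by
  have hs := cosh_add ((s + d) / 2) ((s - d) / 2)
  have hd := cosh_sub ((s + d) / 2) ((s - d) / 2)
  rw [show (s + d) / 2 + (s - d) / 2 = s by ring] at hs
  rw [show (s + d) / 2 - (s - d) / 2 = d by ring] at hd
  rw [hs, hd]
  ring

lemma mul_sub_div_two_le_cosh_sub_cosh {d s : ℝ} (hd : 0 ≤ d) (hds : d ≤ s) :
    s * (s - d) / 2 ≤ cosh s - cosh d := by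
  rw [cosh_sub_cosh_eq_two_mul_sinh_mul_sinh]
  calc s * (s - d) / 2 ≤ 2 * ((s + d) / 2) * ((s - d) / 2) := by nlinarith
    _ ≤ 2 * sinh ((s + d) / 2) * sinh ((s - d) / 2) := by
        have ha : (s + d) / 2 ≤ sinh ((s + d) / 2) := self_le_sinh_iff.mpr (by linarith)
        have hb : (s - d) / 2 ≤ sinh ((s - d) / 2) := self_le_sinh_iff.mpr (by linarith)
        gcongr
        exact mul_nonneg zero_le_two (by linarith)

lemma integrable_mul_exp_neg_sq_div {c : ℝ} (hc : 0 < c) :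
    Integrable fun x : ℝ => x * exp (-x ^ 2 / c) := by
  convert integrable_mul_exp_neg_mul_sq (inv_pos.mpr hc) using 4
  ring

lemma integrableOn_Ioc_sub_rpow {r : ℝ} (hr : -1 < r) (a b : ℝ) :
    IntegrableOn (fun x : ℝ => (x - a) ^ r) (Ioc a b) := by
  rcases le_total a b with hab | hba
  · have := (intervalIntegral.intervalIntegrable_rpow' hr (a := 0) (b := b - a)).comp_sub_right a
    simp only [zero_add, sub_add_cancel] at this
    exact (intervalIntegrable_iff_integrableOn_Ioc_of_le hab).mp this
  · simp [Ioc_eq_empty_of_le hba]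

noncomputable def heatIntegrand (t d s : ℝ) : ℝ :=
  s * exp (-s ^ 2 / (4 * t)) / √(cosh s - cosh d)

section heatIntegrand

variable {t d s : ℝ}

lemma heatIntegrand_nonneg (hs : 0 ≤ s) : 0 ≤ heatIntegrand t d s := by
  unfold heatIntegrand
  positivity

lemma heatIntegrand_le_of_lt (ht : 0 ≤ t) (hd : 0 ≤ d) (hds : d < s) :
    heatIntegrand t d s ≤ √(2 * s) * (s - d) ^ (-(1 / 2) : ℝ) := by
  have hs : 0 < s := hd.trans_lt hds
  have hsd : 0 < s - d := sub_pos.mpr hds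
  have hexp : exp (-s ^ 2 / (4 * t)) ≤ 1 :=
    exp_le_one_iff.mpr (div_nonpos_of_nonpos_of_nonneg (by nlinarith) (by positivity))
  calc heatIntegrand t d s ≤ s / √(s * (s - d) / 2) :=
        div_le_div₀ hs.le (mul_le_of_le_one_right hs.le hexp) (by positivity)
          (sqrt_le_sqrt (mul_sub_div_two_le_cosh_sub_cosh hd hds.le))
    _ = √(2 * s) * (s - d) ^ (-(1 / 2) : ℝ) := by
        rw [rpow_neg hsd.le, ← sqrt_eq_rpow, sqrt_div' _ zero_le_two, sqrt_mul hs.le,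
          sqrt_mul zero_le_two]
        have hs_sqrt : 0 < √s := sqrt_pos.mpr hs
        have hsd_sqrt : 0 < √(s - d) := sqrt_pos.mpr hsd
        field_simp
        rw [sq_sqrt hs.le]

lemma heatIntegrand_le_of_add_one_le (hd : 0 ≤ d) (hds : d + 1 ≤ s) :
    heatIntegrand t d s ≤ √2 * (s * exp (-s ^ 2 / (4 * t))) := by
  have hs : 0 ≤ s := by linarith
  have hcosh : 2⁻¹ ≤ cosh s - cosh d :=
    le_trans (by nlinarith) (mul_sub_div_two_le_cosh_sub_cosh hd (by linarith))
  calc heatIntegrand t d s ≤ s * exp (-s ^ 2 / (4 * t)) / √2⁻¹ := by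
        unfold heatIntegrand
        gcongr
    _ = √2 * (s * exp (-s ^ 2 / (4 * t))) := by
        rw [sqrt_inv, div_inv_eq_mul, mul_comm]

theorem integrableOn_heatIntegrand (ht : 0 < t) (hd : 0 ≤ d) :
    IntegrableOn (heatIntegrand t d) (Ioi d) := by
  have hmeas : AEStronglyMeasurable (heatIntegrand t d) :=
    (by unfold heatIntegrand; fun_prop : Measurable (heatIntegrand t d)).aestronglyMeasurable
  rw [← Ioc_union_Ioi_eq_Ioi (le_add_of_nonneg_right zero_le_one)]
  refine IntegrableOn.union ?_ ?_
  · refine (((integrableOn_Ioc_sub_rpow (r := -(1 / 2)) (by norm_num) d (d + 1)).const_mul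
      √(2 * (d + 1))).mono' hmeas.restrict ?_)
    filter_upwards [ae_restrict_mem measurableSet_Ioc] with s ⟨hds, hsd⟩
    rw [norm_of_nonneg (heatIntegrand_nonneg (hd.trans hds.le))]
    exact (heatIntegrand_le_of_lt ht.le hd hds).trans (by gcongr)
  · refine ((integrable_mul_exp_neg_sq_div (by positivity : 0 < 4 * t)).const_mul
      √2).integrableOn.mono' hmeas.restrict ?_
    filter_upwards [ae_restrict_mem measurableSet_Ioi] with s hds
    rw [norm_of_nonneg (heatIntegrand_nonneg (by linarith [mem_Ioi.mp hds]))]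
    exact heatIntegrand_le_of_add_one_le hd (mem_Ioi.mp hds).le

end heatIntegrand

/-- The integrand in the definition of the hyperbolic heat kernel is integrable on `(d, ∞)`;
in particular the integral defining `H(t,z,z')` is finite for all `t > 0` and `z, z' ∈ ℍ²`. -/
theorem heat_kernel_integrand_integrable (t : ℝ) (ht : 0 < t) :
    (∀ d : ℝ, 0 ≤ d →
      IntegrableOn
        (fun s => s * Real.exp (-s ^ 2 / (4 * t)) / Real.sqrt (Real.cosh s - Real.cosh d))
        (Set.Ioi d)) ∧
    (∀ z z' : ℝ × ℝ, z ∈ H2 → z' ∈ H2 →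
      IntegrableOn
        (fun s => s * Real.exp (-s ^ 2 / (4 * t)) /
          Real.sqrt (Real.cosh s - Real.cosh (hypDist z z')))
        (Set.Ioi (hypDist z z'))) :=
  ⟨fun _ hd => integrableOn_heatIntegrand ht hd,
    fun _ _ hz hz' => integrableOn_heatIntegrand ht (hypDist_nonneg hz hz')⟩
end
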